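/- Let P_1,...,P_k be s–t paths in an acyclic network D. The vertices of the smallest face of the flow polytope F(D) containing χ^{P_1},...,χ^{P_k} are exactly the vertices χ^R for s–t paths R whose arc set satisfies R ⊆ P_1 ∪ ... ∪ P_k. -/

import Mathlib

/-!
A value-1 flow `x` in an acyclic network is positive along some `s`–`t` path `R`, and for small
`ε > 0` the vector `(x - ε χ^R) / (1 - ε)` is again a flow, so `x` lies in an open segment with
endpoint `χ^R`. Since a flow vanishing off the arcs of a path `R` must be `χ^R`, the vertices of
`F(D)` are exactly the `χ^R`, and those of a face `F` are the `χ^R` lying in `F`.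

If `F` is the smallest face containing the `χ^{P_i}`, it is contained in the exposed face on which
every arc outside `P_1 ∪ ⋯ ∪ P_k` carries no flow, so `χ^R ∈ F` forces `R ⊆ P_1 ∪ ⋯ ∪ P_k`.
Conversely `F` contains the barycentre of the `χ^{P_i}`, which is positive on every arc of the
union, and the segment argument puts `χ^R` into `F` whenever `R ⊆ P_1 ∪ ⋯ ∪ P_k`.
-/

open scoped Classical

variable {V : Type*} [Fintype V] [DecidableEq V]

/-- A directed graph (arc set `A`) is acyclic: no directed cycle. -/
def Acyclic (A : Finset (V × V)) : Prop :=
  ∀ v : V, ¬ Relation.TransGen (fun u w => (u, w) ∈ A) v v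

/-- Sum of `x` over the arcs of `A` with tail `v`. -/
noncomputable def outSum (A : Finset (V × V)) (x : V × V → ℝ) (v : V) : ℝ :=
  ∑ a ∈ A.filter (fun a => a.1 = v), x a

/-- Sum of `x` over the arcs of `A` with head `v`. -/
noncomputable def inSum (A : Finset (V × V)) (x : V × V → ℝ) (v : V) : ℝ :=
  ∑ a ∈ A.filter (fun a => a.2 = v), x a

/-- A flow of value 1 in the network `(V, A, s, t)`. -/
def IsFlow (A : Finset (V × V)) (s t : V) (x : V × V → ℝ) : Prop :=
  (∀ a, a ∉ A → x a = 0) ∧ (∀ a, 0 ≤ x a) ∧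
    (∀ v, v ≠ s → v ≠ t → outSum A x v = inSum A x v) ∧
    outSum A x s - inSum A x s = 1

/-- The flow polytope: all value-1 flows, as a subset of `ℝ^(V × V)`. -/
def flowPolytope (A : Finset (V × V)) (s t : V) : Set ((V × V) → ℝ) :=
  {x | IsFlow A s t x}

/-- An `s`–`t` path, given by its list of nodes. -/
def IsPath (A : Finset (V × V)) (s t : V) (p : List V) : Prop :=
  p.Chain' (fun u v => (u, v) ∈ A) ∧ p.head? = some s ∧ p.getLast? = some t ∧ p.Nodup

/-- The arcs of a path given by its node list. -/
def pathEdges (p : List V) : List (V × V) := p.zip p.tail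

/-- Characteristic vector of (the arc set of) a path. -/
def chi (p : List V) : (V × V) → ℝ := fun a => if a ∈ pathEdges p then 1 else 0

section Paths

variable {α : Type*} {A : Finset (α × α)} {s t : α} {p : List α}

theorem mem_pathEdges_iff {a : α × α} :
    a ∈ pathEdges p ↔ ∃ (i : ℕ) (h : i + 1 < p.length), a = (p[i], p[i + 1]) := by
  simp only [pathEdges, List.mem_iff_getElem, List.getElem_zip, List.getElem_tail,
    List.length_zip, List.length_tail]
  constructor
  · rintro ⟨i, hi, rfl⟩; exact ⟨i, by omega, rfl⟩
  · rintro ⟨i, hi, rfl⟩; exact ⟨i, by omega, rfl⟩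

theorem List.IsChain.rel_of_mem_pathEdges {r : α → α → Prop} (hp : p.IsChain r) {a : α × α}
    (ha : a ∈ pathEdges p) : r a.1 a.2 := by
  obtain ⟨i, hi, rfl⟩ := mem_pathEdges_iff.1 ha
  exact List.isChain_iff_getElem.1 hp i hi

theorem eq_of_mem_pathEdges_of_fst_eq (hp : p.Nodup) {a b : α × α} (ha : a ∈ pathEdges p)
    (hb : b ∈ pathEdges p) (h : a.1 = b.1) : a = b := by
  obtain ⟨i, hi, rfl⟩ := mem_pathEdges_iff.1 ha
  obtain ⟨j, hj, rfl⟩ := mem_pathEdges_iff.1 hb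
  obtain rfl : i = j := (hp.getElem_inj_iff).1 h
  rfl

theorem eq_of_mem_pathEdges_of_snd_eq (hp : p.Nodup) {a b : α × α} (ha : a ∈ pathEdges p)
    (hb : b ∈ pathEdges p) (h : a.2 = b.2) : a = b := by
  obtain ⟨i, hi, rfl⟩ := mem_pathEdges_iff.1 ha
  obtain ⟨j, hj, rfl⟩ := mem_pathEdges_iff.1 hb
  obtain rfl : i = j := by simpa using (hp.getElem_inj_iff).1 h
  rfl

theorem IsPath.getElem_eq_source_iff (hp : IsPath A s t p) {i : ℕ} (hi : i < p.length) :
    p[i] = s ↔ i = 0 := by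
  have h0 : p[0]'(by omega) = s := by
    simpa [List.head?_eq_getElem?, List.getElem?_eq_getElem (show 0 < p.length by omega)]
      using hp.2.1
  rw [← h0, hp.2.2.2.getElem_inj_iff]

theorem IsPath.getElem_eq_target_iff (hp : IsPath A s t p) {i : ℕ} (hi : i < p.length) :
    p[i] = t ↔ i = p.length - 1 := by
  have h0 : p[p.length - 1]'(by omega) = t := by
    simpa [List.getLast?_eq_getElem?,
      List.getElem?_eq_getElem (show p.length - 1 < p.length by omega)] using hp.2.2.1
  rw [← h0, hp.2.2.2.getElem_inj_iff]

theorem IsPath.one_lt_length (hp : IsPath A s t p) (hst : s ≠ t) : 1 < p.length := by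
  have hpos : 0 < p.length := List.length_pos_iff.2 fun h => by simp [h, IsPath] at hp
  by_contra! h
  exact hst (((hp.getElem_eq_source_iff hpos).2 rfl).symm.trans
    ((hp.getElem_eq_target_iff hpos).2 (by omega)))

theorem Acyclic.nodup_of_isChain (hA : Acyclic A) {l : List α}
    (hl : l.IsChain fun u w => (u, w) ∈ A) : l.Nodup :=
  have : Std.Irrefl (Relation.TransGen fun u w => (u, w) ∈ A) := ⟨hA⟩
  have hl' : l.IsChain (Relation.TransGen fun u w => (u, w) ∈ A) :=
    hl.imp fun _ _ => Relation.TransGen.single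
  hl'.pairwise.nodup

theorem Acyclic.wellFounded [Finite α] (hA : Acyclic A) :
    WellFounded fun w v : α => Relation.TransGen (fun u w => (u, w) ∈ A) v w :=
  have : Std.Irrefl fun w v => Relation.TransGen (fun u w => (u, w) ∈ A) v w := ⟨hA⟩
  have : IsTrans α fun w v => Relation.TransGen (fun u w => (u, w) ∈ A) v w :=
    ⟨fun _ _ _ h₁ h₂ => h₂.trans h₁⟩
  Finite.wellFounded_of_trans_of_irrefl _

end Paths

section Flows

variable {α : Type*} [DecidableEq α] {A : Finset (α × α)} {s t : α} {x y : α × α → ℝ}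

theorem outSum_smul_add_smul (c d : ℝ) (v : α) :
    outSum A (c • x + d • y) v = c * outSum A x v + d * outSum A y v := by
  simp [outSum, Finset.sum_add_distrib, Finset.mul_sum]

theorem inSum_smul_add_smul (c d : ℝ) (v : α) :
    inSum A (c • x + d • y) v = c * inSum A x v + d * inSum A y v := by
  simp [inSum, Finset.sum_add_distrib, Finset.mul_sum]

theorem IsFlow.smul_add_smul (hx : IsFlow A s t x) (hy : IsFlow A s t y) {c d : ℝ}
    (hcd : c + d = 1) (hnn : ∀ a, 0 ≤ (c • x + d • y) a) : IsFlow A s t (c • x + d • y) := by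
  obtain ⟨hx0, -, hxc, hxv⟩ := hx
  obtain ⟨hy0, -, hyc, hyv⟩ := hy
  refine ⟨fun a ha => by simp [hx0 a ha, hy0 a ha], hnn, fun v hs ht => ?_, ?_⟩
  · rw [outSum_smul_add_smul, inSum_smul_add_smul, hxc v hs ht, hyc v hs ht]
  · rw [outSum_smul_add_smul, inSum_smul_add_smul]
    linear_combination c * hxv + d * hyv + hcd

theorem convex_flowPolytope : Convex ℝ (flowPolytope A s t) := by
  intro x hx y hy c d hc hd hcd
  exact hx.smul_add_smul hy hcd fun a =>
    add_nonneg (mul_nonneg hc (hx.2.1 a)) (mul_nonneg hd (hy.2.1 a))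

-- Summing the net outflow over all nodes counts every arc once in each direction.
theorem IsFlow.ne [Fintype α] (hx : IsFlow A s t x) : s ≠ t := by
  rintro rfl
  obtain ⟨-, -, hcons, hval⟩ := hx
  have hsum : ∑ v, (outSum A x v - inSum A x v) = 0 := by
    simp only [Finset.sum_sub_distrib, outSum, inSum, Finset.sum_fiberwise, sub_self]
  rw [Finset.sum_eq_single s (fun v _ hv => sub_eq_zero.2 (hcons v hv hv)) (by simp)] at hsum
  linarith

theorem IsFlow.inSum_le_outSum (hx : IsFlow A s t x) {v : α} (hv : v ≠ t) :
    inSum A x v ≤ outSum A x v := by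
  by_cases hvs : v = s
  · subst hvs
    linarith [hx.2.2.2]
  · exact (hx.2.2.1 v hvs hv).ge

end Flows

section PathFlows

variable {α : Type*} [DecidableEq α] {A : Finset (α × α)} {s t : α} {p : List α}
  {x : α × α → ℝ}

theorem outSum_eq_zero_of_supported (hx : ∀ a ∉ pathEdges p, x a = 0) {v : α}
    (hv : ∀ a ∈ pathEdges p, a.1 ≠ v) : outSum A x v = 0 :=
  Finset.sum_eq_zero fun a ha => hx a fun hap => hv a hap (Finset.mem_filter.1 ha).2

theorem inSum_eq_zero_of_supported (hx : ∀ a ∉ pathEdges p, x a = 0) {v : α}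
    (hv : ∀ a ∈ pathEdges p, a.2 ≠ v) : inSum A x v = 0 :=
  Finset.sum_eq_zero fun a ha => hx a fun hap => hv a hap (Finset.mem_filter.1 ha).2

namespace IsPath

theorem outSum_getElem (hp : IsPath A s t p) (hx : ∀ a ∉ pathEdges p, x a = 0) {i : ℕ}
    (hi : i + 1 < p.length) : outSum A x p[i] = x (p[i], p[i + 1]) := by
  have he : (p[i], p[i + 1]) ∈ pathEdges p := mem_pathEdges_iff.2 ⟨i, hi, rfl⟩
  refine Finset.sum_eq_single_of_mem _ (Finset.mem_filter.2 ⟨hp.1.rel_of_mem_pathEdges he, rfl⟩)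
    fun b hb hbe => hx b fun hbp => hbe ?_
  exact eq_of_mem_pathEdges_of_fst_eq hp.2.2.2 hbp he (Finset.mem_filter.1 hb).2

theorem inSum_getElem_succ (hp : IsPath A s t p) (hx : ∀ a ∉ pathEdges p, x a = 0) {i : ℕ}
    (hi : i + 1 < p.length) : inSum A x p[i + 1] = x (p[i], p[i + 1]) := by
  have he : (p[i], p[i + 1]) ∈ pathEdges p := mem_pathEdges_iff.2 ⟨i, hi, rfl⟩
  refine Finset.sum_eq_single_of_mem _ (Finset.mem_filter.2 ⟨hp.1.rel_of_mem_pathEdges he, rfl⟩)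
    fun b hb hbe => hx b fun hbp => hbe ?_
  exact eq_of_mem_pathEdges_of_snd_eq hp.2.2.2 hbp he (Finset.mem_filter.1 hb).2

theorem inSum_source (hp : IsPath A s t p) (hx : ∀ a ∉ pathEdges p, x a = 0) :
    inSum A x s = 0 := by
  refine inSum_eq_zero_of_supported hx fun a ha => ?_
  obtain ⟨i, hi, rfl⟩ := mem_pathEdges_iff.1 ha
  simp [hp.getElem_eq_source_iff]

theorem chi_isFlow (hp : IsPath A s t p) (hst : s ≠ t) : IsFlow A s t (chi p) := by
  have hx : ∀ a ∉ pathEdges p, chi p a = 0 := fun a ha => if_neg ha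
  have hchi : ∀ {i} (hi : i + 1 < p.length), chi p (p[i], p[i + 1]) = 1 :=
    fun hi => if_pos (mem_pathEdges_iff.2 ⟨_, hi, rfl⟩)
  refine ⟨fun a ha => hx a fun hap => ha (hp.1.rel_of_mem_pathEdges hap),
    fun a => by unfold chi; split_ifs <;> norm_num, fun v hvs hvt => ?_, ?_⟩
  · by_cases hv : v ∈ p
    · obtain ⟨j, hj, rfl⟩ := List.mem_iff_getElem.1 hv
      obtain ⟨i, rfl⟩ : ∃ i, j = i + 1 := Nat.exists_eq_add_one.2
        (Nat.pos_of_ne_zero fun h => hvs ((hp.getElem_eq_source_iff hj).2 h))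
      have hi : i + 2 < p.length := by
        have : i + 1 ≠ p.length - 1 := fun h => hvt ((hp.getElem_eq_target_iff hj).2 h)
        omega
      rw [hp.outSum_getElem hx hi, hp.inSum_getElem_succ hx (by omega), hchi, hchi]
    · have hv' : ∀ a ∈ pathEdges p, a.1 ≠ v ∧ a.2 ≠ v := by
        intro a ha
        obtain ⟨i, hi, rfl⟩ := mem_pathEdges_iff.1 ha
        exact ⟨fun h => hv (h ▸ List.getElem_mem _), fun h => hv (h ▸ List.getElem_mem _)⟩
      rw [outSum_eq_zero_of_supported hx fun a ha => (hv' a ha).1,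
        inSum_eq_zero_of_supported hx fun a ha => (hv' a ha).2]
  · have h1 := hp.one_lt_length hst
    have h0 : p[0] = s := (hp.getElem_eq_source_iff _).2 rfl
    rw [hp.inSum_source hx, ← h0, hp.outSum_getElem hx h1, hchi]
    norm_num

theorem eq_chi_of_supported (hp : IsPath A s t p) (hx : IsFlow A s t x)
    (hsupp : ∀ a ∉ pathEdges p, x a = 0) : x = chi p := by
  have hone : ∀ i (hi : i + 1 < p.length), x (p[i], p[i + 1]) = 1 := by
    intro i
    induction i with
    | zero =>
      intro hi
      have h0 : p[0] = s := (hp.getElem_eq_source_iff _).2 rfl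
      have hval := hx.2.2.2
      rw [hp.inSum_source hsupp, ← h0, hp.outSum_getElem hsupp hi] at hval
      linarith
    | succ i ih =>
      intro hi
      have hs : p[i + 1] ≠ s := fun h => by simpa using (hp.getElem_eq_source_iff _).1 h
      have ht : p[i + 1] ≠ t := fun h => by have := (hp.getElem_eq_target_iff _).1 h; omega
      have hcons := hx.2.2.1 _ hs ht
      rwa [hp.outSum_getElem hsupp hi, hp.inSum_getElem_succ hsupp (by omega), ih (by omega)]
        at hcons
  funext a
  by_cases ha : a ∈ pathEdges p
  · obtain ⟨i, hi, rfl⟩ := mem_pathEdges_iff.1 ha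
    rw [hone i hi, chi, if_pos ha]
  · rw [hsupp a ha, chi, if_neg ha]

theorem chi_mem_extremePoints (hp : IsPath A s t p) (hst : s ≠ t) :
    chi p ∈ (flowPolytope A s t).extremePoints ℝ := by
  refine ⟨hp.chi_isFlow hst, fun x hx y hy ⟨c, d, hc, hd, _, hxy⟩ => ?_⟩
  refine hp.eq_chi_of_supported hx fun a ha => ?_
  have h := congrFun hxy a
  simp only [Pi.add_apply, Pi.smul_apply, smul_eq_mul, chi, if_neg ha] at h
  nlinarith [hx.2.1 a, hy.2.1 a]

end IsPath

end PathFlows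

open Filter Topology in
theorem Finset.exists_pos_lt_one_forall_le {ι : Type*} (S : Finset ι) {f : ι → ℝ}
    (hf : ∀ i ∈ S, 0 < f i) : ∃ ε, 0 < ε ∧ ε < 1 ∧ ∀ i ∈ S, ε ≤ f i := by
  have h : ∀ᶠ ε in 𝓝 (0 : ℝ), ε < 1 ∧ ∀ i ∈ S, ε ≤ f i :=
    (eventually_lt_nhds one_pos).and
      (S.eventually_all.2 fun i hi => (eventually_lt_nhds (hf i hi)).mono fun _ => le_of_lt)
  obtain ⟨ε, hε0, hε⟩ := (eventually_mem_nhdsWithin.and (nhdsWithin_le_nhds h)).exists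
    (f := 𝓝[>] (0 : ℝ))
  exact ⟨ε, hε0, hε⟩

theorem isExposed_setOf_map_eq_zero {E : Type*} [AddCommGroup E] [Module ℝ E]
    [TopologicalSpace E] {C : Set E} (l : StrongDual ℝ E) (hl : ∀ x ∈ C, 0 ≤ l x) :
    IsExposed ℝ C {x ∈ C | l x = 0} := by
  rintro ⟨x₀, hx₀C, hx₀⟩
  refine ⟨-l, Set.ext fun x => ⟨fun ⟨hxC, hx⟩ => ⟨hxC, fun y hy => ?_⟩,
    fun ⟨hxC, hmax⟩ => ⟨hxC, ?_⟩⟩⟩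
  · simpa [hx] using hl y hy
  · have h := hmax x₀ hx₀C
    simp only [neg_apply, hx₀, neg_zero, neg_nonneg] at h
    exact le_antisymm h (hl x hxC)

section Faces

variable {α : Type*} [DecidableEq α] {A : Finset (α × α)} {s t : α} {x : α × α → ℝ}
  {R : List α}

theorem IsFlow.exists_mem_openSegment_chi (hx : IsFlow A s t x) (hR : IsPath A s t R)
    (hst : s ≠ t) (hpos : ∀ a ∈ pathEdges R, 0 < x a) :
    ∃ y ∈ flowPolytope A s t, x ∈ openSegment ℝ (chi R) y := by
  obtain ⟨ε, hε0, hε1, hε⟩ := (pathEdges R).toFinset.exists_pos_lt_one_forall_le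
    fun a ha => hpos a (List.mem_toFinset.1 ha)
  have h1ε : 0 < 1 - ε := sub_pos.2 hε1
  refine ⟨(1 - ε)⁻¹ • x + (-(ε / (1 - ε))) • chi R, ?_, ε, 1 - ε, hε0, h1ε, by ring, ?_⟩
  · refine hx.smul_add_smul (hR.chi_isFlow hst) (by field_simp; ring) fun a => ?_
    have hnum : 0 ≤ x a - ε * chi R a := by
      by_cases ha : a ∈ pathEdges R
      · simpa [chi, ha] using hε a (List.mem_toFinset.2 ha)
      · simpa [chi, ha] using hx.2.1 a
    have heq : ((1 - ε)⁻¹ • x + (-(ε / (1 - ε))) • chi R) a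
        = (x a - ε * chi R a) / (1 - ε) := by
      simp only [Pi.add_apply, Pi.smul_apply, smul_eq_mul]
      field_simp
      ring
    rw [heq]
    positivity
  · funext a
    simp only [Pi.add_apply, Pi.smul_apply, smul_eq_mul]
    field_simp
    ring

theorem IsFlow.exists_isChain_pos_to_target [Finite α] (hA : Acyclic A) (hx : IsFlow A s t x)
    (v : α) (hv : 0 < outSum A x v) :
    ∃ l, (v :: l).IsChain (fun u w => (u, w) ∈ A ∧ 0 < x (u, w)) ∧
      (v :: l).getLast? = some t := by
  induction v using hA.wellFounded.induction with
  | _ v ih =>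
  obtain ⟨⟨u, w⟩, ha, hxa⟩ :=
    Finset.exists_lt_of_sum_lt (f := fun _ => (0 : ℝ)) (by simpa [outSum] using hv)
  obtain ⟨haA, rfl : u = v⟩ := Finset.mem_filter.1 ha
  by_cases hw : w = t
  · exact ⟨[w], .cons_cons ⟨haA, hxa⟩ (.singleton _), by simp [hw]⟩
  · have hin : x (u, w) ≤ inSum A x w :=
      Finset.single_le_sum (fun b _ => hx.2.1 b) (Finset.mem_filter.2 ⟨haA, rfl⟩)
    have hw_out : 0 < outSum A x w := hxa.trans_le (hin.trans (hx.inSum_le_outSum hw))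
    obtain ⟨l, hl, hlast⟩ := ih w (.single haA) hw_out
    exact ⟨w :: l, .cons_cons ⟨haA, hxa⟩ hl, by simpa using hlast⟩

theorem IsFlow.exists_isPath_pos [Finite α] (hA : Acyclic A) (hx : IsFlow A s t x) :
    ∃ R, IsPath A s t R ∧ ∀ a ∈ pathEdges R, 0 < x a := by
  have hs : 0 < outSum A x s := by
    have : 0 ≤ inSum A x s := Finset.sum_nonneg fun a _ => hx.2.1 a
    linarith [hx.2.2.2]
  obtain ⟨l, hl, hlast⟩ := hx.exists_isChain_pos_to_target hA s hs
  have hlA : (s :: l).IsChain fun u w => (u, w) ∈ A := hl.imp fun _ _ h => h.1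
  exact ⟨s :: l, ⟨hlA, rfl, hlast, hA.nodup_of_isChain hlA⟩,
    fun a ha => (hl.rel_of_mem_pathEdges ha).2⟩

theorem extremePoints_flowPolytope [Finite α] (hA : Acyclic A) (hst : s ≠ t) :
    (flowPolytope A s t).extremePoints ℝ = {x | ∃ R, IsPath A s t R ∧ x = chi R} := by
  ext x
  constructor
  · intro ⟨hx, hext⟩
    obtain ⟨R, hR, hpos⟩ := IsFlow.exists_isPath_pos hA hx
    obtain ⟨y, hy, hseg⟩ := IsFlow.exists_mem_openSegment_chi hx hR hst hpos
    exact ⟨R, hR, (hext (hR.chi_isFlow hst) hy hseg).symm⟩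
  · rintro ⟨R, hR, rfl⟩
    exact hR.chi_mem_extremePoints hst

theorem IsExtreme.chi_mem_of_pos {F : Set (α × α → ℝ)}
    (hF : IsExtreme ℝ (flowPolytope A s t) F) (hxF : x ∈ F) (hR : IsPath A s t R) (hst : s ≠ t)
    (hpos : ∀ a ∈ pathEdges R, 0 < x a) : chi R ∈ F := by
  obtain ⟨y, hy, hseg⟩ := IsFlow.exists_mem_openSegment_chi (hF.subset hxF) hR hst hpos
  exact hF.left_mem_of_mem_openSegment (hR.chi_isFlow hst) hy hxF hseg

end Faces

theorem Convex.exists_mem_forall_pos_of_chi_mem {α ι : Type*} [DecidableEq α] [Fintype ι]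
    [Nonempty ι] {F : Set (α × α → ℝ)} (hF : Convex ℝ F) {P : ι → List α}
    (hPF : ∀ i, chi (P i) ∈ F) :
    ∃ x ∈ F, ∀ a, (∃ i, a ∈ pathEdges (P i)) → 0 < x a := by
  have hk : (0 : ℝ) < Fintype.card ι := by exact_mod_cast Fintype.card_pos
  refine ⟨∑ i, (Fintype.card ι : ℝ)⁻¹ • chi (P i),
    hF.sum_mem (fun _ _ => by positivity) (by simp [hk.ne']) fun i _ => hPF i,
    fun a ⟨j, hj⟩ => ?_⟩
  have hchi : ∀ i, 0 ≤ (Fintype.card ι : ℝ)⁻¹ * chi (P i) a := fun i => by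
    unfold chi; split_ifs <;> positivity
  calc (0 : ℝ) < (Fintype.card ι : ℝ)⁻¹ * chi (P j) a := by simp [chi, hj, hk]
    _ ≤ ∑ i, (Fintype.card ι : ℝ)⁻¹ * chi (P i) a :=
      Finset.single_le_sum (fun i _ => hchi i) (Finset.mem_univ j)
    _ = (∑ i, (Fintype.card ι : ℝ)⁻¹ • chi (P i)) a := by simp

theorem eq_zero_of_forall_not_mem_pathEdges {α ι : Type*} [DecidableEq α] {A : Finset (α × α)}
    {s t : α} {P : ι → List α} {F : Set (α × α → ℝ)}
    (hPC : ∀ i, chi (P i) ∈ flowPolytope A s t)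
    (hFmin : ∀ G, IsExposed ℝ (flowPolytope A s t) G → (∀ i, chi (P i) ∈ G) → F ⊆ G)
    {x : α × α → ℝ} (hx : x ∈ F) {a : α × α} (ha : ∀ i, a ∉ pathEdges (P i)) : x a = 0 := by
  set S := A.filter fun a => ∀ i, a ∉ pathEdges (P i)
  set l : StrongDual ℝ (α × α → ℝ) := ∑ b ∈ S, ContinuousLinearMap.proj b
  have hl : ∀ y, l y = ∑ b ∈ S, y b := fun y => by simp [l]
  have hG := isExposed_setOf_map_eq_zero l fun y (hy : IsFlow A s t y) =>
    (hl y).symm ▸ Finset.sum_nonneg fun b _ => hy.2.1 b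
  have hPG : ∀ i, chi (P i) ∈ {y ∈ flowPolytope A s t | l y = 0} := fun i =>
    ⟨hPC i, (hl _).trans (Finset.sum_eq_zero fun b hb => if_neg ((Finset.mem_filter.1 hb).2 i))⟩
  obtain ⟨hxC, hlx⟩ := hFmin _ hG hPG hx
  by_cases haA : a ∈ A
  · rw [hl] at hlx
    exact (Finset.sum_eq_zero_iff_of_nonneg fun b _ => hxC.2.1 b).1 hlx a
      (Finset.mem_filter.2 ⟨haA, ha⟩)
  · exact hxC.1 a haA

theorem stmt6_general (A : Finset (V × V)) (s t : V) (hA : Acyclic A)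
    (k : ℕ) (hk : 1 ≤ k) (P : Fin k → List V)
    (F : Set ((V × V) → ℝ))
    (hFface : IsExposed ℝ (flowPolytope A s t) F)
    (hFmem : ∀ i, chi (P i) ∈ F)
    (hFmin : ∀ G, IsExposed ℝ (flowPolytope A s t) G → (∀ i, chi (P i) ∈ G) → F ⊆ G) :
    Set.extremePoints ℝ F
      = {x | ∃ R : List V, IsPath A s t R ∧
          (∀ a ∈ pathEdges R, ∃ i, a ∈ pathEdges (P i)) ∧ x = chi R} := by
  have hF := hFface.isExtreme
  have hPC : ∀ i, chi (P i) ∈ flowPolytope A s t := fun i => hF.subset (hFmem i)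
  have : Nonempty (Fin k) := ⟨⟨0, hk⟩⟩
  have hst : s ≠ t := IsFlow.ne (hPC ⟨0, hk⟩)
  obtain ⟨x₀, hx₀F, hx₀⟩ :=
    (hFface.convex convex_flowPolytope).exists_mem_forall_pos_of_chi_mem hFmem
  rw [hF.extremePoints_eq, extremePoints_flowPolytope hA hst]
  ext x
  constructor
  · rintro ⟨hxF, R, hR, rfl⟩
    refine ⟨R, hR, fun a ha => ?_, rfl⟩
    by_contra! h
    have h0 := eq_zero_of_forall_not_mem_pathEdges hPC hFmin hxF h
    simp [chi, ha] at h0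
  · rintro ⟨R, hR, hRP, rfl⟩
    exact ⟨hF.chi_mem_of_pos hx₀F hR hst fun a ha => hx₀ a (hRP a ha), R, hR, rfl⟩

/-- The vertices of the smallest face of the flow polytope containing the vertices
`χ^{P₁}, …, χ^{P_k}` are exactly the vertices `χ^R` for `s`–`t` paths `R` with
`R ⊆ P₁ ∪ ⋯ ∪ P_k` (as arc sets). -/
theorem stmt6 (A : Finset (V × V)) (s t : V) (hA : Acyclic A)
    (k : ℕ) (hk : 1 ≤ k) (P : Fin k → List V) (hP : ∀ i, IsPath A s t (P i))
    (F : Set ((V × V) → ℝ))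
    (hFface : IsExposed ℝ (flowPolytope A s t) F)
    (hFmem : ∀ i, chi (P i) ∈ F)
    (hFmin : ∀ G, IsExposed ℝ (flowPolytope A s t) G → (∀ i, chi (P i) ∈ G) → F ⊆ G) :
    Set.extremePoints ℝ F
      = {x | ∃ R : List V, IsPath A s t R ∧
          (∀ a ∈ pathEdges R, ∃ i, a ∈ pathEdges (P i)) ∧ x = chi R} :=
  stmt6_general A s t hA k hk P F hFface hFmem hFmin
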